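/- In a minimal-size tree-topology execution of a 2-phase-bounded broadcast protocol covering q_f at the root: every non-root vertex broadcasts at least one message during the execution, and, for any vertex u₁ and its child u₂ (both non-root), the index of the first broadcast of u₂ is strictly smaller than the index of the first broadcast of u₁. -/

import Mathlib

namespace BN

/-- Actions of a broadcast protocol: broadcast `!!m`, reception `?m`, internal `τ`. -/
inductive Act (M : Type) : Type where
  | brd : M → Act M
  | rcv : M → Act M
  | tau : Act M

/-- A broadcast protocol: an initial state and a set of transitions. -/
structure Protocol (Q M : Type) : Type where
  qin : Q
  delta : Set (Q × Act M × Q)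

variable {Q M V : Type}

/-- `q` has an outgoing reception of `m`. -/
def canRecv (P : Protocol Q M) (q : Q) (m : M) : Prop :=
  ∃ q', (q, Act.rcv m, q') ∈ P.delta

/-- One step of the broadcast network semantics over topology `G`,
performed by vertex `v` taking transition `t`. -/
def Step (G : SimpleGraph V) (P : Protocol Q M) (v : V)
    (t : Q × Act M × Q) (L L' : V → Q) : Prop :=
  t ∈ P.delta ∧ L v = t.1 ∧ L' v = t.2.2 ∧
  (match t.2.1 with
   | Act.tau => ∀ u, u ≠ v → L' u = L u
   | Act.brd m =>
       (∀ u, G.Adj v u →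
          ((L u, Act.rcv m, L' u) ∈ P.delta ∨ (¬ canRecv P (L u) m ∧ L' u = L u))) ∧
       (∀ u, u ≠ v → ¬ G.Adj v u → L' u = L u)
   | Act.rcv _ => False)

def StepAny (G : SimpleGraph V) (P : Protocol Q M) (L L' : V → Q) : Prop :=
  ∃ v t, Step G P v t L L'

def Reach (G : SimpleGraph V) (P : Protocol Q M) : (V → Q) → (V → Q) → Prop :=
  Relation.ReflTransGen (StepAny G P)

def initConf (P : Protocol Q M) : V → Q := fun _ => P.qin

/-- `qf` is coverable over the class of all (finite) graph topologies. -/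
def Coverable (P : Protocol Q M) (qf : Q) : Prop :=
  ∃ (V' : Type) (_ : Fintype V') (G : SimpleGraph V') (L : V' → Q),
    Reach G P (initConf P) L ∧ ∃ v, L v = qf

/-- A tree topology: a prefix-closed finite set of words over ℕ containing ε. -/
structure TreeTopo : Type where
  verts : Finset (List ℕ)
  nil_mem : ([] : List ℕ) ∈ verts
  prefixClosed : ∀ w ∈ verts, ∀ w' : List ℕ, w' <+: w → w' ∈ verts

abbrev TreeTopo.Vert (T : TreeTopo) : Type := {w : List ℕ // w ∈ T.verts}

def TreeTopo.root (T : TreeTopo) : T.Vert := ⟨[], T.nil_mem⟩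

/-- The graph of a tree topology: each word `w ++ [x]` is adjacent to its parent `w`. -/
def TreeTopo.graph (T : TreeTopo) : SimpleGraph T.Vert where
  Adj u v := (∃ x : ℕ, (v : List ℕ) = (u : List ℕ) ++ [x]) ∨
             (∃ x : ℕ, (u : List ℕ) = (v : List ℕ) ++ [x])
  symm := by constructor; intro u v h; exact h.symm
  loopless := by
    constructor
    intro u h
    rcases h with ⟨x, hx⟩ | ⟨x, hx⟩ <;> simpa using congrArg List.length hx

def CoverableWith (T : TreeTopo) (P : Protocol Q M) (qf : Q) : Prop :=
  ∃ L : T.Vert → Q, Reach T.graph P (initConf P) L ∧ ∃ u, L u = qf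

def CoverableTreeRoot (P : Protocol Q M) (qf : Q) : Prop :=
  ∃ (T : TreeTopo) (L : T.Vert → Q),
    Reach T.graph P (initConf P) L ∧ L T.root = qf

/-- `(T, lam)` is the unfolding of graph `G` at vertex `v` to depth `n`. -/
structure IsUnfolding {V : Type} (G : SimpleGraph V) (v : V) (n : ℕ)
    (T : TreeTopo) (lam : T.Vert → V) : Prop where
  root_lbl : lam T.root = v
  depth_le : ∀ w ∈ T.verts, w.length ≤ n
  root_children :
    Set.BijOn lam {u : T.Vert | ∃ x : ℕ, (u : List ℕ) = [x]} (G.neighborSet v)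
  children : ∀ (u : T.Vert) (w : List ℕ) (hw : w ∈ T.verts) (x : ℕ),
      (u : List ℕ) = w ++ [x] → (u : List ℕ).length < n →
      Set.BijOn lam {u' : T.Vert | ∃ y : ℕ, (u' : List ℕ) = (u : List ℕ) ++ [y]}
        (G.neighborSet (lam u) \ {lam ⟨w, hw⟩})
  no_deep : ∀ u : T.Vert, n ≤ (u : List ℕ).length →
      ∀ x : ℕ, (u : List ℕ) ++ [x] ∉ T.verts

/-- Phase tags annotating states: `zero` (phase 0), broadcast phase `j`, reception phase `j`. -/
inductive PTag : Type where
  | zero : PTag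
  | bph : ℕ → PTag
  | rph : ℕ → PTag
deriving DecidableEq

def bOf : ℕ → PTag
  | 0 => .zero
  | j+1 => .bph (j+1)

def rOf : ℕ → PTag
  | 0 => .zero
  | j+1 => .rph (j+1)

/-- `φ` witnesses that `P` is `k`-phase-bounded. -/
def IsPhaseAssignment (k : ℕ) (P : Protocol Q M) (φ : Q → PTag) : Prop :=
  φ P.qin = .zero ∧
  (∀ q : Q, φ q = .zero ∨ ∃ j, 1 ≤ j ∧ j ≤ k ∧ (φ q = .bph j ∨ φ q = .rph j)) ∧
  ∀ t ∈ P.delta,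
    (match t.2.1 with
     | Act.tau => φ t.1 = φ t.2.2
     | Act.brd _ =>
         (∃ j, 1 ≤ j ∧ j ≤ k ∧ φ t.1 = .bph j ∧ φ t.2.2 = .bph j) ∨
         (∃ i, i < k ∧ φ t.1 = rOf i ∧ φ t.2.2 = .bph (i+1))
     | Act.rcv _ =>
         (∃ j, 1 ≤ j ∧ j ≤ k ∧ φ t.1 = .rph j ∧ φ t.2.2 = .rph j) ∨
         (∃ i, i < k ∧ φ t.1 = bOf i ∧ φ t.2.2 = .rph (i+1)) ∨
         (1 ≤ k ∧ φ t.1 = .bph k ∧ φ t.2.2 = .rph k))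

def IsPhaseBounded (k : ℕ) (P : Protocol Q M) : Prop :=
  ∃ φ : Q → PTag, IsPhaseAssignment k P φ

/-- The `k`-unfolding `Pₖ` of a protocol `P`. -/
def unfoldP (P : Protocol Q M) (k : ℕ) : Protocol (Q × PTag) M where
  qin := (P.qin, .zero)
  delta :=
    {t | ∃ q p, (q, Act.tau, p) ∈ P.delta ∧ t = ((q, .zero), Act.tau, (p, .zero))} ∪
    {t | ∃ q p α j, 1 ≤ j ∧ j ≤ k ∧ (q, α, p) ∈ P.delta ∧
        (α = Act.tau ∨ ∃ m, α = Act.rcv m) ∧ t = ((q, .rph j), α, (p, .rph j))} ∪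
    {t | ∃ q p α j, 1 ≤ j ∧ j ≤ k ∧ (q, α, p) ∈ P.delta ∧
        (α = Act.tau ∨ ∃ m, α = Act.brd m) ∧ t = ((q, .bph j), α, (p, .bph j))} ∪
    {t | ∃ q p m j, j < k ∧ (q, Act.brd m, p) ∈ P.delta ∧
        t = ((q, rOf j), Act.brd m, (p, .bph (j+1)))} ∪
    {t | ∃ q p m j, j < k ∧ (q, Act.rcv m, p) ∈ P.delta ∧
        t = ((q, bOf j), Act.rcv m, (p, .rph (j+1)))} ∪
    {t | ∃ q p m, 1 ≤ k ∧ (q, Act.rcv m, p) ∈ P.delta ∧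
        t = ((q, .bph k), Act.rcv m, (p, .rph k))}

/-- Star topology: root `none` adjacent to every leaf `some i`, no other edges. -/
def starGraph (ι : Type) : SimpleGraph (Option ι) where
  Adj u v := (u = none ∧ v ≠ none) ∨ (v = none ∧ u ≠ none)
  symm := by constructor; intro u v h; tauto
  loopless := by constructor; intro u h; tauto

/-- For a 1-phase-bounded protocol with witness `φ`, `Q^b = Q₀ ∪ Q₁^b`. -/
def Qb (φ : Q → PTag) : Set Q := {q | φ q = .zero ∨ φ q = .bph 1}

/-- The set component of the broadcast-print of a star configuration. -/
def bprintSet {ι : Type} (φ : Q → PTag) (L : Option ι → Q) : Set Q :=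
  {q | q ∈ Qb φ ∧ ∃ i, L (some i) = q}

/-- The abstract transition relation `⇒` on broadcast-prints. -/
def PrintStep (P : Protocol Q M) (φ : Q → PTag) :
    (Q × Set Q) → (Q × Set Q) → Prop := fun pr pr' =>
  ∃ (ι : Type) (_ : Fintype ι) (L L' : Option ι → Q),
    StepAny (starGraph ι) P L L' ∧ L none ∈ Qb φ ∧ L' none ∈ Qb φ ∧
    pr = (L none, bprintSet φ L) ∧ pr' = (L' none, bprintSet φ L')

/-- Line topology on `Fin ℓ`: consecutive vertices are adjacent. -/
def lineGraph (ℓ : ℕ) : SimpleGraph (Fin ℓ) where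
  Adj i j := (i : ℕ) + 1 = (j : ℕ) ∨ (j : ℕ) + 1 = (i : ℕ)
  symm := by constructor; intro i j h; tauto
  loopless := by constructor; intro i h; rcases h with h | h <;> omega

/-- `t` is a broadcast transition. -/
def IsBrdT (t : Q × Act M × Q) : Prop := ∃ m, t.2.1 = Act.brd m

/-- In the execution described by `vs, ts` of length `n`, `i` is the first index at
which vertex `u` performs a broadcast. -/
def IsFirstBrd {V' : Type} (vs : ℕ → V') (ts : ℕ → Q × Act M × Q) (n : ℕ)
    (u : V') (i : ℕ) : Prop :=
  i < n ∧ vs i = u ∧ IsBrdT (ts i) ∧ ∀ j < i, vs j = u → ¬ IsBrdT (ts j)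

/-- Every transition of `u` occurs no later than every broadcast of `w`
(i.e. lastBroadcast(u) ≤ firstBroadcast(w)). -/
def BrdOrder {V' : Type} (n : ℕ) (vs : ℕ → V') (ts : ℕ → Q × Act M × Q)
    (u w : V') : Prop :=
  ∀ j j', j < n → j' < n → vs j = u → vs j' = w → IsBrdT (ts j') → j ≤ j'

/-- One application of the pair-coverability operator. -/
def pairStep (P : Protocol Q M) (S : Set (Q × Q)) : Set (Q × Q) :=
  S ∪
  {p | ∃ p₁, (p₁, p.2) ∈ S ∧ (p₁, Act.tau, p.1) ∈ P.delta} ∪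
  {p | ∃ p₂, (p.1, p₂) ∈ S ∧ (p₂, Act.tau, p.2) ∈ P.delta} ∪
  {p | ∃ p₁ p₂ m, (p₁, p₂) ∈ S ∧ (p₂, Act.brd m, p.2) ∈ P.delta ∧
      (p₁, Act.rcv m, p.1) ∈ P.delta} ∪
  {p | ∃ p₂ m, (p.1, p₂) ∈ S ∧ (p₂, Act.brd m, p.2) ∈ P.delta ∧ ¬ canRecv P p.1 m} ∪
  {p | p.1 = P.qin ∧ ∃ q', (p.2, q') ∈ S}

/-- The iteration `S₀ ⊆ S₁ ⊆ …` of the pair-coverability operator. -/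
def Siter (P : Protocol Q M) : ℕ → Set (Q × Q)
  | 0 => {(P.qin, P.qin)}
  | i+1 => pairStep P (Siter P i)


/-!
Both claims are proved by pruning. A subtree hanging below a vertex `p` influences the rest of
the tree only through the broadcasts of its root, which `p` receives. If a non-root vertex never
broadcasts, its subtree can be erased without changing the run elsewhere. For the second claim,
suppose the child `u₂` of a non-root vertex `u₁` first broadcasts after `u₁` does. The first time the subtree of `u₂`
changes the state of `u₁` is then a reception by `u₁` after its first broadcast; in a 2-phase-bounded
protocol this moves `u₁` into the last reception phase, so `u₁` never broadcasts again and its later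
states do not matter to anybody else. The subtree of `u₂` can again be erased, `u₁` answering the
remaining broadcasts arbitrarily. Both prunings contradict the minimality of the tree.
-/

lemma exists_rcv_response (P : Protocol Q M) (m : M) (q : Q) :
    ∃ q', (q, Act.rcv m, q') ∈ P.delta ∨ (¬ canRecv P q m ∧ q' = q) := by
  by_cases h : canRecv P q m
  · obtain ⟨q', hq'⟩ := h
    exact ⟨q', Or.inl hq'⟩
  · exact ⟨q, Or.inr ⟨h, rfl⟩⟩

namespace Step

variable {G : SimpleGraph V} {P : Protocol Q M} {a v : V} {t : Q × Act M × Q} {L L' : V → Q}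

lemma apply_eq_of_not_adj (h : Step G P a t L L') (hv : v ≠ a) (hadj : ¬ G.Adj a v) :
    L' v = L v := by
  obtain ⟨q, α, q'⟩ := t
  obtain ⟨-, -, -, hm⟩ := h
  cases α with
  | tau => exact hm v hv
  | brd m => exact hm.2 v hv hadj
  | rcv m => exact hm.elim

lemma apply_eq_of_not_isBrdT (h : Step G P a t L L') (hv : v ≠ a) (hb : ¬ IsBrdT t) :
    L' v = L v := by
  obtain ⟨q, α, q'⟩ := t
  obtain ⟨-, -, -, hm⟩ := h
  cases α with
  | tau => exact hm v hv
  | brd m => exact absurd ⟨m, rfl⟩ hb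
  | rcv m => exact hm.elim

lemma exists_rcv_of_apply_ne (h : Step G P a t L L') (hv : v ≠ a) (hne : L' v ≠ L v) :
    ∃ m, (L v, Act.rcv m, L' v) ∈ P.delta := by
  obtain ⟨q, α, q'⟩ := t
  obtain ⟨-, -, -, hm⟩ := h
  cases α with
  | tau => exact absurd (hm v hv) hne
  | rcv m => exact hm.elim
  | brd m =>
    by_cases hadj : G.Adj a v
    · rcases hm.1 v hadj with hrcv | ⟨-, heq⟩
      · exact ⟨m, hrcv⟩
      · exact absurd heq hne
    · exact absurd (hm.2 v hv hadj) hne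

lemma apply_eq_or_mem_delta (h : Step G P a t L L') (v : V) :
    L' v = L v ∨ ∃ α, (L v, α, L' v) ∈ P.delta := by
  rcases eq_or_ne v a with rfl | hv
  · obtain ⟨ht, hsrc, hdst, -⟩ := h
    exact Or.inr ⟨t.2.1, by rw [hsrc, hdst]; exact ht⟩
  · by_cases hne : L' v = L v
    · exact Or.inl hne
    · obtain ⟨m, hm⟩ := h.exists_rcv_of_apply_ne hv hne
      exact Or.inr ⟨_, hm⟩

lemma exists_comap {V' : Type} {G' : SimpleGraph V'} (f : G' ↪g G) {a : V'}
    (h : Step G P (f a) t L L') {K : V' → Q} (ha : K a = L (f a)) :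
    ∃ K', Step G' P a t K K' ∧ ∀ v, K v = L (f v) → K' v = L' (f v) := by
  classical
  obtain ⟨q, α, q'⟩ := t
  obtain ⟨ht, hsrc, hdst, hm⟩ := h
  cases α with
  | rcv m => exact hm.elim
  | tau =>
    refine ⟨Function.update K a q', ⟨ht, ha.trans hsrc, by simp, fun u hu => by simp [hu]⟩,
      fun v hv => ?_⟩
    rcases eq_or_ne v a with rfl | hva
    · simpa using hdst.symm
    · rw [Function.update_of_ne hva, hv, hm _ (f.injective.ne hva)]
  | brd m =>
    choose resp hresp using exists_rcv_response P m
    refine ⟨fun v => if v = a then q' else if G'.Adj a v then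
        (if K v = L (f v) then L' (f v) else resp (K v)) else K v,
      ⟨ht, ha.trans hsrc, by simp, fun u hadj => ?_, fun u hu hnadj => by simp [hu, hnadj]⟩,
      fun v hv => ?_⟩
    · simp only [if_neg hadj.ne', if_pos hadj]
      split_ifs with hagree
      · rw [hagree]
        exact hm.1 _ (f.map_adj_iff.mpr hadj)
      · exact hresp _
    · rcases eq_or_ne v a with rfl | hva
      · simpa using hdst.symm
      · by_cases hadj : G'.Adj a v
        · simp [hva, hadj, hv]
        · simp only [if_neg hva, if_neg hadj, hv]
          exact (hm.2 _ (f.injective.ne hva) (mt f.map_adj_iff.mp hadj)).symm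

end Step

section Run

variable {G : SimpleGraph V} {P : Protocol Q M} {n : ℕ} {Ls : ℕ → V → Q} {vs : ℕ → V}
  {ts : ℕ → Q × Act M × Q}

lemma run_preserves (hstep : ∀ i < n, Step G P (vs i) (ts i) (Ls i) (Ls (i+1)))
    {R : Q → Prop} (hR : ∀ q α q', (q, α, q') ∈ P.delta → R q → R q') {v : V} {i₀ : ℕ}
    (h : R (Ls i₀ v)) : ∀ i, i₀ ≤ i → i ≤ n → R (Ls i v) := by
  intro i hi
  induction i, hi using Nat.le_induction with
  | base => exact fun _ => h
  | succ i _ ih =>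
    intro hin
    rcases (hstep i hin).apply_eq_or_mem_delta v with heq | ⟨α, hα⟩
    · rw [heq]; exact ih (Nat.le_of_succ_le hin)
    · exact hR _ _ _ hα (ih (Nat.le_of_succ_le hin))

end Run

/-- Once a process of a 2-phase-bounded protocol has broadcast, its phase stays among these;
a reception from any of them leads to `rph 2`, from which no broadcast is possible. -/
def PostBrdPhase (φ : Q → PTag) (q : Q) : Prop :=
  φ q = .bph 1 ∨ φ q = .bph 2 ∨ φ q = .rph 2

section Phase

variable {P : Protocol Q M} {φ : Q → PTag} {q q' : Q} {m : M}

lemma phase_eq_of_tau (hφ : IsPhaseAssignment 2 P φ) (ht : (q, Act.tau, q') ∈ P.delta) :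
    φ q = φ q' :=
  hφ.2.2 _ ht

lemma postBrdPhase_of_brd (hφ : IsPhaseAssignment 2 P φ) (ht : (q, Act.brd m, q') ∈ P.delta) :
    PostBrdPhase φ q' := by
  rcases hφ.2.2 _ ht with ⟨j, hj1, hj2, -, hq'⟩ | ⟨i, hi, -, hq'⟩
  · interval_cases j
    · exact Or.inl hq'
    · exact Or.inr (Or.inl hq')
  · interval_cases i
    · exact Or.inl hq'
    · exact Or.inr (Or.inl hq')

lemma phase_ne_rph_two_of_brd (hφ : IsPhaseAssignment 2 P φ)
    (ht : (q, Act.brd m, q') ∈ P.delta) : φ q ≠ .rph 2 := by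
  rcases hφ.2.2 _ ht with ⟨j, -, -, hq, -⟩ | ⟨i, hi, hq, -⟩
  · simp [hq]
  · interval_cases i <;> simp [hq, rOf]

lemma phase_eq_rph_two_of_rcv (hφ : IsPhaseAssignment 2 P φ)
    (ht : (q, Act.rcv m, q') ∈ P.delta) (hq : PostBrdPhase φ q) : φ q' = .rph 2 := by
  rcases hφ.2.2 _ ht with ⟨j, -, -, hqj, hq'⟩ | ⟨i, hi, hqi, hq'⟩ | ⟨-, -, hq'⟩
  · rcases hq with hq | hq | hq <;> rw [hqj] at hq <;> cases hq
    exact hq'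
  · interval_cases i
    · rcases hq with hq | hq | hq <;> rw [hqi] at hq <;> cases hq
    · exact hq'
  · exact hq'

lemma postBrdPhase_of_mem_delta (hφ : IsPhaseAssignment 2 P φ) {α : Act M}
    (ht : (q, α, q') ∈ P.delta) (hq : PostBrdPhase φ q) : PostBrdPhase φ q' := by
  cases α with
  | tau => rwa [PostBrdPhase, ← phase_eq_of_tau hφ ht]
  | brd m => exact postBrdPhase_of_brd hφ ht
  | rcv m => exact Or.inr (Or.inr (phase_eq_rph_two_of_rcv hφ ht hq))

lemma phase_eq_rph_two_of_mem_delta (hφ : IsPhaseAssignment 2 P φ) {α : Act M}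
    (ht : (q, α, q') ∈ P.delta) (hq : φ q = .rph 2) : φ q' = .rph 2 := by
  cases α with
  | tau => rwa [← phase_eq_of_tau hφ ht]
  | brd m => exact absurd hq (phase_ne_rph_two_of_brd hφ ht)
  | rcv m => exact phase_eq_rph_two_of_rcv hφ ht (Or.inr (Or.inr hq))

lemma not_isBrdT_of_rcv_after_brd {G : SimpleGraph V} {n : ℕ} {Ls : ℕ → V → Q} {vs : ℕ → V}
    {ts : ℕ → Q × Act M × Q} (hφ : IsPhaseAssignment 2 P φ)
    (hstep : ∀ i < n, Step G P (vs i) (ts i) (Ls i) (Ls (i+1))) {v : V} {i₀ j : ℕ}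
    (hi₀j : i₀ < j) (hvi₀ : vs i₀ = v) (hbrd : IsBrdT (ts i₀)) (hjn : j < n) (hvj : vs j ≠ v)
    (hchg : Ls (j+1) v ≠ Ls j v) :
    ∀ i, j ≤ i → i < n → vs i = v → ¬ IsBrdT (ts i) := by
  have brd_mem : ∀ i < n, IsBrdT (ts i) → ∃ m, ((ts i).1, Act.brd m, (ts i).2.2) ∈ P.delta :=
    fun i hi ⟨m, hm⟩ => ⟨m, hm ▸ (hstep i hi).1⟩
  have hpost₀ : PostBrdPhase φ (Ls (i₀+1) v) := by
    obtain ⟨m, hm⟩ := brd_mem i₀ (by omega) hbrd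
    rw [← hvi₀, (hstep i₀ (by omega)).2.2.1]
    exact postBrdPhase_of_brd hφ hm
  have hpost : PostBrdPhase φ (Ls j v) :=
    run_preserves hstep (fun _ _ _ => postBrdPhase_of_mem_delta hφ) hpost₀ j hi₀j hjn.le
  obtain ⟨m, hrcv⟩ := (hstep j hjn).exists_rcv_of_apply_ne (Ne.symm hvj) hchg
  have hlast : ∀ i, j + 1 ≤ i → i ≤ n → φ (Ls i v) = .rph 2 :=
    run_preserves hstep (fun _ _ _ => phase_eq_rph_two_of_mem_delta hφ)
      (phase_eq_rph_two_of_rcv hφ hrcv hpost)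
  intro i hji hin hvi hb
  have hij : j < i := lt_of_le_of_ne hji fun h => hvj (h ▸ hvi)
  obtain ⟨m', hm'⟩ := brd_mem i hin hb
  have hsrc : Ls i v = (ts i).1 := hvi ▸ (hstep i hin).2.1
  exact phase_ne_rph_two_of_brd hφ hm' (hsrc ▸ hlast i hij hin.le)

end Phase

namespace TreeTopo

lemma ne_of_val_eq_append {T : TreeTopo} {u p : T.Vert} {x : ℕ}
    (h : (u : List ℕ) = p ++ [x]) : p ≠ u := by
  rintro rfl
  simpa using congrArg List.length h

lemma exists_val_eq_append {T : TreeTopo} {u : T.Vert} (hu : u ≠ T.root) :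
    ∃ (p : T.Vert) (x : ℕ), (u : List ℕ) = p ++ [x] := by
  have hne : (u : List ℕ) ≠ [] := fun h => hu (Subtype.ext h)
  exact ⟨⟨_, T.prefixClosed _ u.2 _ (List.dropLast_prefix _)⟩, _,
    (List.dropLast_append_getLast hne).symm⟩

lemma eq_of_adj_of_prefix {T : TreeTopo} {a v p w : T.Vert} {x : ℕ}
    (hw : (w : List ℕ) = p ++ [x]) (hadj : T.graph.Adj a v) (ha : (w : List ℕ) <+: a)
    (hv : ¬ (w : List ℕ) <+: v) : v = p ∧ a = w := by
  rcases hadj with ⟨y, hy⟩ | ⟨y, hy⟩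
  · exact absurd (ha.trans (hy ▸ List.prefix_append _ _)) hv
  · rw [hy, hw] at ha
    rcases List.prefix_concat_iff.mp ha with h | h
    · obtain ⟨hpv, hxy⟩ := List.append_inj' h rfl
      exact ⟨Subtype.ext hpv.symm, Subtype.ext (by rw [hy, hw, hpv, hxy])⟩
    · exact absurd (hw ▸ h) hv

/-- The tree `T` without the subtree rooted at the child `p ++ [x]` of `p`. -/
def eraseSubtree (T : TreeTopo) (p : List ℕ) (x : ℕ) : TreeTopo where
  verts := T.verts.filter fun u => ¬ p ++ [x] <+: u
  nil_mem := Finset.mem_filter.mpr ⟨T.nil_mem, by simp⟩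
  prefixClosed u hu u' hu' := by
    rw [Finset.mem_filter] at hu ⊢
    exact ⟨T.prefixClosed u hu.1 u' hu', fun h => hu.2 (h.trans hu')⟩

def eraseSubtreeEmb (T : TreeTopo) (p : List ℕ) (x : ℕ) :
    (T.eraseSubtree p x).graph ↪g T.graph where
  toFun v := ⟨v.1, (Finset.mem_filter.mp v.2).1⟩
  inj' _ _ h := Subtype.ext (congrArg Subtype.val h :)
  map_rel_iff' := Iff.rfl

lemma not_prefix_eraseSubtreeEmb (T : TreeTopo) (p : List ℕ) (x : ℕ)
    (v : (T.eraseSubtree p x).Vert) : ¬ p ++ [x] <+: (T.eraseSubtreeEmb p x v : List ℕ) :=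
  (Finset.mem_filter.mp v.2).2

lemma card_eraseSubtree_lt {T : TreeTopo} {p : List ℕ} {x : ℕ} (h : p ++ [x] ∈ T.verts) :
    (T.eraseSubtree p x).verts.card < T.verts.card :=
  Finset.card_lt_card <| (Finset.ssubset_iff_of_subset (Finset.filter_subset _ _)).mpr
    ⟨_, h, by simp⟩

end TreeTopo

section Pruning

open TreeTopo

variable {P : Protocol Q M} {T : TreeTopo} {n : ℕ} {Ls : ℕ → T.Vert → Q} {vs : ℕ → T.Vert}
  {ts : ℕ → Q × Act M × Q}

lemma not_coverableWith_eraseSubtree {qf : Q}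
    (hmin : ∀ T' : TreeTopo, CoverableWith T' P qf → T.verts.card ≤ T'.verts.card)
    {p : List ℕ} {x : ℕ} (h : p ++ [x] ∈ T.verts) : ¬ CoverableWith (T.eraseSubtree p x) P qf :=
  fun hcov => (card_eraseSubtree_lt h).not_ge (hmin _ hcov)

lemma exists_reach_eraseSubtree_succ
    (hstep : ∀ i < n, Step T.graph P (vs i) (ts i) (Ls i) (Ls (i+1)))
    {p w : T.Vert} {x : ℕ} (hw : (w : List ℕ) = p ++ [x]) {j : ℕ}
    (hbefore : ∀ i < j, i < n → vs i = w → Ls (i+1) p = Ls i p)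
    (hafter : ∀ i, j ≤ i → i < n → vs i = p → ¬ IsBrdT (ts i))
    {i : ℕ} (hi : i < n) {K : (T.eraseSubtree p x).Vert → Q}
    (hK : Reach (T.eraseSubtree p x).graph P (initConf P) K)
    (hagree : ∀ v, T.eraseSubtreeEmb p x v ≠ p ∨ i ≤ j → K v = Ls i (T.eraseSubtreeEmb p x v)) :
    ∃ K' : (T.eraseSubtree p x).Vert → Q, Reach (T.eraseSubtree p x).graph P (initConf P) K' ∧
      ∀ v, T.eraseSubtreeEmb p x v ≠ p ∨ i + 1 ≤ j →
        K' v = Ls (i+1) (T.eraseSubtreeEmb p x v) := by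
  set f := T.eraseSubtreeEmb p x
  have hagree' : ∀ v, f v ≠ p ∨ i + 1 ≤ j → K v = Ls i (f v) :=
    fun v hv => hagree v (hv.imp_right fun h => by omega)
  by_cases hsub : (w : List ℕ) <+: vs i
  · refine ⟨K, hK, fun v hv => (hagree' v hv).trans ?_⟩
    have hv_sub : ¬ (w : List ℕ) <+: f v := hw ▸ not_prefix_eraseSubtreeEmb T p x v
    by_cases hadj : T.graph.Adj (vs i) (f v)
    · obtain ⟨hvp, hvw⟩ := eq_of_adj_of_prefix hw hadj hsub hv_sub
      rw [hvp]
      exact (hbefore i (hv.resolve_left (not_not.mpr hvp)) hi hvw).symm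
    · exact ((hstep i hi).apply_eq_of_not_adj (fun h => hv_sub (by rw [h]; exact hsub)) hadj).symm
  obtain ⟨a, ha⟩ : ∃ a, f a = vs i :=
    ⟨⟨vs i, Finset.mem_filter.mpr ⟨(vs i).2, hw ▸ hsub⟩⟩, rfl⟩
  by_cases hact : vs i ≠ p ∨ i < j
  · obtain ⟨K', hK'step, hK'⟩ := (ha ▸ hstep i hi).exists_comap f
      (hagree a (hact.imp (ha ▸ ·) le_of_lt))
    exact ⟨K', hK.tail ⟨a, _, hK'step⟩, fun v hv => hK' v (hagree' v hv)⟩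
  · push Not at hact
    refine ⟨K, hK, fun v hv => ?_⟩
    have hvp : f v ≠ p := hv.resolve_right (by omega)
    rw [hagree' v hv, (hstep i hi).apply_eq_of_not_isBrdT (hact.1 ▸ hvp)
      (hafter i hact.2 hi hact.1)]

lemma coverableWith_eraseSubtree (h0 : Ls 0 = initConf P)
    (hstep : ∀ i < n, Step T.graph P (vs i) (ts i) (Ls i) (Ls (i+1)))
    {p w : T.Vert} {x : ℕ} (hw : (w : List ℕ) = p ++ [x]) (j : ℕ)
    (hbefore : ∀ i < j, i < n → vs i = w → Ls (i+1) p = Ls i p)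
    (hafter : ∀ i, j ≤ i → i < n → vs i = p → ¬ IsBrdT (ts i))
    (hroot : p ≠ T.root ∨ n ≤ j) :
    CoverableWith (T.eraseSubtree p x) P (Ls n T.root) := by
  have key : ∀ i ≤ n, ∃ K, Reach (T.eraseSubtree p x).graph P (initConf P) K ∧
      ∀ v, T.eraseSubtreeEmb p x v ≠ p ∨ i ≤ j → K v = Ls i (T.eraseSubtreeEmb p x v) := by
    intro i
    induction i with
    | zero => exact fun _ => ⟨initConf P, .refl, fun v _ => by rw [h0]; rfl⟩
    | succ i ih =>
      intro hi
      obtain ⟨K, hK, hagree⟩ := ih (Nat.le_of_succ_le hi)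
      exact exists_reach_eraseSubtree_succ hstep hw hbefore hafter hi hK hagree
  obtain ⟨K, hK, hagree⟩ := key n le_rfl
  exact ⟨K, hK, ⟨[], (T.eraseSubtree p x).nil_mem⟩, hagree _ (hroot.imp_left Ne.symm)⟩

lemma exists_isBrdT_of_ne_root (h0 : Ls 0 = initConf P)
    (hstep : ∀ i < n, Step T.graph P (vs i) (ts i) (Ls i) (Ls (i+1)))
    (hmin : ∀ T' : TreeTopo, CoverableWith T' P (Ls n T.root) → T.verts.card ≤ T'.verts.card)
    {u : T.Vert} (hu : u ≠ T.root) : ∃ i, i < n ∧ vs i = u ∧ IsBrdT (ts i) := by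
  by_contra! hsilent
  obtain ⟨p, x, hup⟩ := exists_val_eq_append hu
  refine not_coverableWith_eraseSubtree hmin (hup ▸ u.2) <|
    coverableWith_eraseSubtree h0 hstep hup n (fun i _ hin hvi => ?_) (fun i hi hin => by omega)
      (Or.inr le_rfl)
  exact (hstep i hin).apply_eq_of_not_isBrdT (hvi ▸ ne_of_val_eq_append hup) (hsilent i hin hvi)

lemma firstBrd_lt_of_child {φ : Q → PTag} (hφ : IsPhaseAssignment 2 P φ)
    (h0 : Ls 0 = initConf P) (hstep : ∀ i < n, Step T.graph P (vs i) (ts i) (Ls i) (Ls (i+1)))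
    (hmin : ∀ T' : TreeTopo, CoverableWith T' P (Ls n T.root) → T.verts.card ≤ T'.verts.card)
    {u₁ u₂ : T.Vert} {x : ℕ} (hu₁ : u₁ ≠ T.root) (hu₂ : (u₂ : List ℕ) = u₁ ++ [x])
    {i₁ i₂ : ℕ} (hF₁ : IsFirstBrd vs ts n u₁ i₁) (hF₂ : IsFirstBrd vs ts n u₂ i₂) : i₂ < i₁ := by
  classical
  by_contra! hle
  have hne : u₁ ≠ u₂ := ne_of_val_eq_append hu₂
  have hlt : i₁ < i₂ := lt_of_le_of_ne hle fun h => hne (hF₁.2.1.symm.trans (h ▸ hF₂.2.1))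
  -- `j` is the first time the subtree of `u₂` changes the state of `u₁`, or `n` if there is none.
  have hex : ∃ j, j = n ∨ (j < n ∧ vs j = u₂ ∧ Ls (j+1) u₁ ≠ Ls j u₁) := ⟨n, Or.inl rfl⟩
  refine not_coverableWith_eraseSubtree hmin (hu₂ ▸ u₂.2) <|
    coverableWith_eraseSubtree h0 hstep hu₂ (Nat.find hex) (fun i hij hin hvi => ?_) ?_
      (Or.inl hu₁)
  · by_contra hchg
    exact Nat.find_min hex hij (Or.inr ⟨hin, hvi, hchg⟩)
  rcases Nat.find_spec hex with hjn | ⟨hjn, hvj, hchg⟩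
  · intro i hi hin
    omega
  have hbrd : IsBrdT (ts (Nat.find hex)) := by
    by_contra hb
    exact hchg ((hstep _ hjn).apply_eq_of_not_isBrdT (by rw [hvj]; exact hne) hb)
  have hi₂ : i₂ ≤ Nat.find hex := by
    by_contra! h
    exact hF₂.2.2.2 _ h hvj hbrd
  exact not_isBrdT_of_rcv_after_brd hφ hstep (by omega) hF₁.2.1 hF₁.2.2.1 hjn
    (by rw [hvj]; exact hne.symm) hchg

end Pruning

/-- in a minimal tree execution of a 2-phase-bounded protocol covering
`qf` at the root, every non-root vertex broadcasts, and children broadcast strictly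
before their parents. -/
theorem minimal_tree_broadcast_order {Q M : Type} (P : Protocol Q M)
    (φ : Q → PTag) (hφ : IsPhaseAssignment 2 P φ) (qf : Q)
    (T : TreeTopo) (n : ℕ) (Ls : ℕ → T.Vert → Q) (vs : ℕ → T.Vert)
    (ts : ℕ → Q × Act M × Q)
    (h0 : Ls 0 = initConf P)
    (hstep : ∀ i < n, Step T.graph P (vs i) (ts i) (Ls i) (Ls (i+1)))
    (hf : Ls n T.root = qf)
    (hmin : ∀ T' : TreeTopo, CoverableWith T' P qf → T.verts.card ≤ T'.verts.card) :
    (∀ u : T.Vert, u ≠ T.root → ∃ i, i < n ∧ vs i = u ∧ IsBrdT (ts i)) ∧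
    (∀ (u₁ u₂ : T.Vert) (x : ℕ), u₁ ≠ T.root →
      (u₂ : List ℕ) = (u₁ : List ℕ) ++ [x] →
      ∀ i₁ i₂, IsFirstBrd vs ts n u₁ i₁ → IsFirstBrd vs ts n u₂ i₂ → i₂ < i₁) := by
  subst hf
  exact ⟨fun u hu => exists_isBrdT_of_ne_root h0 hstep hmin hu,
    fun u₁ u₂ x hu₁ hu₂ i₁ i₂ => firstBrd_lt_of_child hφ h0 hstep hmin hu₁ hu₂⟩

end BN
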